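/- A De Morgan function lies in the clone ⟨DMA, □⟩ = ⟨∧, ∨, t, f, −, □⟩ if and only if it is harmonious and preserves B2, K3 and P3. Moreover, a De Morgan function lies in ⟨DLat, □, ◇⟩ = ⟨∧, ∨, t, f, □, ◇⟩ if and only if it is harmonious, positive, and preserves B2, K3 and P3. -/

import Mathlib

set_option autoImplicit false

/-- The four truth values of the Belnap–Dunn logic. -/
inductive DM4 : Type
  | t
  | f
  | n
  | b
deriving DecidableEq

namespace DM4

/-- De Morgan negation. -/
def neg : DM4 → DM4
  | t => f
  | f => t
  | n => n
  | b => b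

/-- Conflation. -/
def conf : DM4 → DM4
  | t => t
  | f => f
  | n => b
  | b => n

/-- Meet in the truth order. -/
def meet : DM4 → DM4 → DM4
  | f, _ => f
  | _, f => f
  | t, y => y
  | x, t => x
  | n, n => n
  | b, b => b
  | n, b => f
  | b, n => f

/-- Join in the truth order. -/
def join : DM4 → DM4 → DM4
  | t, _ => t
  | _, t => t
  | f, y => y
  | x, f => x
  | n, n => n
  | b, b => b
  | n, b => t
  | b, n => t

/-- Meet in the information order (⊗). -/
def imeet : DM4 → DM4 → DM4
  | n, _ => n
  | _, n => n
  | b, y => y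
  | x, b => x
  | t, t => t
  | f, f => f
  | t, f => n
  | f, t => n

/-- Join in the information order (⊕). -/
def ijoin : DM4 → DM4 → DM4
  | b, _ => b
  | _, b => b
  | n, y => y
  | x, n => x
  | t, t => t
  | f, f => f
  | t, f => b
  | f, t => b

/-- The truth order: least element `f`, greatest element `t`, with `n`, `b` incomparable. -/
def tle (x y : DM4) : Prop := x = y ∨ x = f ∨ y = t

/-- The information order: least element `n`, greatest element `b`, with `t`, `f` incomparable. -/
def ile (x y : DM4) : Prop := x = y ∨ x = n ∨ y = b

/-- □: maps t to t and everything else to f. -/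
def box : DM4 → DM4
  | t => t
  | _ => f

/-- ◇: maps f to f and everything else to t. -/
def diamond : DM4 → DM4
  | f => f
  | _ => t

/-- Δ: maps t, b to t and n, f to f. -/
def delta : DM4 → DM4
  | t => t
  | b => t
  | _ => f

/-- ∇: maps t, n to t and b, f to f. -/
def nabla : DM4 → DM4
  | t => t
  | n => t
  | _ => f

/-- id_{b↦n}: maps b to n and fixes t, f, n. -/
def idbn : DM4 → DM4
  | b => n
  | x => x

/-- id_{n↦b}: maps n to b and fixes t, f, b. -/
def idnb : DM4 → DM4
  | n => b
  | x => x

/-- id_{n↦t}: maps n to t and fixes t, f, b. -/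
def idnt : DM4 → DM4
  | n => t
  | x => x

/-- id_{b↦t}: maps b to t and fixes t, f, n. -/
def idbt : DM4 → DM4
  | b => t
  | x => x

/-- t_{n↦n}: maps n to n and everything else to t. -/
def tnn : DM4 → DM4
  | n => n
  | _ => t

/-- t_{b↦b}: maps b to b and everything else to t. -/
def tbb : DM4 → DM4
  | b => b
  | _ => t

/-- The binary function pbp²₁. -/
def pbp1 : DM4 → DM4 → DM4
  | t, t => t | t, f => f | t, n => f | t, b => b
  | f, t => t | f, f => f | f, n => f | f, b => b
  | n, t => t | n, f => f | n, n => n | n, b => b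
  | b, t => b | b, f => f | b, n => f | b, b => b

/-- The binary function pbp²₂. -/
def pbp2 : DM4 → DM4 → DM4
  | t, t => t | t, f => f | t, n => n | t, b => f
  | f, t => t | f, f => f | f, n => n | f, b => f
  | n, t => n | n, f => f | n, n => n | n, b => f
  | b, t => t | b, f => f | b, n => n | b, b => b

/-- The binary function mnh²₁. -/
def mnh1 : DM4 → DM4 → DM4
  | t, t => f | t, f => f | t, n => n | t, b => b
  | f, t => f | f, f => f | f, n => n | f, b => b
  | n, t => f | n, f => f | n, n => n | n, b => f
  | b, t => f | b, f => f | b, n => n | b, b => b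

/-- The binary function mnh²₂. -/
def mnh2 : DM4 → DM4 → DM4
  | t, t => f | t, f => f | t, n => n | t, b => b
  | f, t => f | f, f => f | f, n => n | f, b => b
  | n, t => f | n, f => f | n, n => n | n, b => b
  | b, t => f | b, f => f | b, n => f | b, b => b

/-- The binary function mhnp². -/
def mhnp2 : DM4 → DM4 → DM4
  | t, _ => t
  | f, _ => t
  | n, b => f
  | n, _ => n
  | b, n => f
  | b, _ => b

/-- The binary function mnp²₁. -/
def mnp1 : DM4 → DM4 → DM4
  | t, b => b
  | t, _ => t
  | f, b => b
  | f, _ => t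
  | n, b => f
  | n, _ => n
  | b, n => f
  | b, _ => b

/-- The binary function mnp²₂. -/
def mnp2 : DM4 → DM4 → DM4
  | t, _ => t
  | f, _ => t
  | n, _ => n
  | b, n => f
  | b, _ => b

/-- The binary function mnp²₃. -/
def mnp3 : DM4 → DM4 → DM4
  | t, n => n
  | t, _ => t
  | f, n => n
  | f, _ => t
  | n, b => f
  | n, _ => n
  | b, n => f
  | b, _ => b

/-- The binary function mnp²₄. -/
def mnp4 : DM4 → DM4 → DM4
  | t, _ => t
  | f, _ => t
  | n, b => f
  | n, _ => n
  | b, _ => b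

/-- The ternary function mhnp³. -/
def mhnp3 : DM4 → DM4 → DM4 → DM4
  | _, t, _ => f
  | _, f, _ => f
  | t, n, _ => n
  | f, n, _ => f
  | b, n, _ => f
  | n, n, b => f
  | n, n, _ => n
  | t, b, _ => b
  | f, b, _ => f
  | n, b, _ => f
  | b, b, n => f
  | b, b, _ => b

/-- The set of designated values. -/
def Des : Set DM4 := {t, b}

/-- Designatedness as a Boolean predicate. -/
def des : DM4 → Bool
  | t => true
  | b => true
  | _ => false

/-- The protoimplication →_{t-max}. -/
def tmax (x y : DM4) : DM4 :=
  match des x, des y with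
  | true, false => n
  | _, _ => t

/-- The protoimplication →_{i-max}. -/
def imax (x y : DM4) : DM4 :=
  match des x, des y with
  | true, false => f
  | _, _ => b

/-- The protoimplication ↔_{t-min}. -/
def tmin (x y : DM4) : DM4 := if x = y then b else f

/-- The protoimplication ↔_{i-min}. -/
def imin (x y : DM4) : DM4 := if x = y then t else n

/-- A binary operation is a protoimplication if it satisfies Reflexivity and Modus Ponens
with respect to the designated set {t, b}. -/
def IsProtoimplication (r : DM4 → DM4 → DM4) : Prop :=
  (∀ a : DM4, r a a ∈ Des) ∧ ∀ a c : DM4, a ∈ Des → r a c ∈ Des → c ∈ Des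

/-- `DMFun k` is the type of De Morgan functions of arity `k + 1` (arities are positive). -/
abbrev DMFun (k : ℕ) : Type := (Fin (k + 1) → DM4) → DM4

/-- Membership in the clone generated by the family of operations `S`
(`S k` is the set of generators of arity `k + 1`). -/
inductive InClone (S : ∀ k : ℕ, Set (DMFun k)) : ∀ k : ℕ, DMFun k → Prop
  | base {k : ℕ} {g : DMFun k} : g ∈ S k → InClone S k g
  | proj {k : ℕ} (i : Fin (k + 1)) : InClone S k (fun x => x i)
  | comp {k m : ℕ} {g : DMFun m} {h : Fin (m + 1) → DMFun k} :
      InClone S m g → (∀ i, InClone S k (h i)) →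
      InClone S k (fun x => g (fun i => h i x))

/-- A family of sets of De Morgan functions is a clone if it contains all projections
and is closed under composition. -/
structure IsClone (C : ∀ k : ℕ, Set (DMFun k)) : Prop where
  proj : ∀ (k : ℕ) (i : Fin (k + 1)), (fun x => x i) ∈ C k
  comp : ∀ (k m : ℕ) (g : DMFun m) (h : Fin (m + 1) → DMFun k),
      g ∈ C m → (∀ i, h i ∈ C k) → (fun x => g (fun i => h i x)) ∈ C k

/-- The generating family consisting of a single unary operation. -/
def op1 (g : DM4 → DM4) : ∀ k : ℕ, Set (DMFun k)
  | 0 => {fun x => g (x 0)}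
  | _ + 1 => ∅

/-- The generating family consisting of a single binary operation. -/
def op2 (g : DM4 → DM4 → DM4) : ∀ k : ℕ, Set (DMFun k)
  | 1 => {fun x => g (x 0) (x 1)}
  | _ => ∅

/-- The generating family consisting of a single ternary operation. -/
def op3 (g : DM4 → DM4 → DM4 → DM4) : ∀ k : ℕ, Set (DMFun k)
  | 2 => {fun x => g (x 0) (x 1) (x 2)}
  | _ => ∅

/-- Union of two families of operations. -/
def funion (S T : ∀ k : ℕ, Set (DMFun k)) : ∀ k : ℕ, Set (DMFun k) := fun k => S k ∪ T k

infixr:65 " ⊹ " => funion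

/-- The generators of DLat: ∧, ∨, t, f (constants as unary constant functions). -/
def DLatGen : ∀ k : ℕ, Set (DMFun k) :=
  op2 meet ⊹ op2 join ⊹ op1 (fun _ => t) ⊹ op1 (fun _ => f)

/-- The generators of DMA: ∧, ∨, t, f, −. -/
def DMAGen : ∀ k : ℕ, Set (DMFun k) := DLatGen ⊹ op1 neg

/-- The generators of BiLat: ∧, ∨, t, f, ⊗, ⊕, n, b. -/
def BiLatGen : ∀ k : ℕ, Set (DMFun k) :=
  DLatGen ⊹ op2 imeet ⊹ op2 ijoin ⊹ op1 (fun _ => n) ⊹ op1 (fun _ => b)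

/-- A De Morgan function is harmonious if it commutes with conflation. -/
def Harmonious {k : ℕ} (g : DMFun k) : Prop :=
  ∀ x : Fin (k + 1) → DM4, g (fun i => conf (x i)) = conf (g x)

/-- A De Morgan function is positive if it is monotone in the componentwise truth order. -/
def Positive {k : ℕ} (g : DMFun k) : Prop :=
  ∀ x y : Fin (k + 1) → DM4, (∀ i, tle (x i) (y i)) → tle (g x) (g y)

/-- A De Morgan function is persistent if it is monotone in the componentwise
information order. -/
def Persistent {k : ℕ} (g : DMFun k) : Prop :=
  ∀ x y : Fin (k + 1) → DM4, (∀ i, ile (x i) (y i)) → ile (g x) (g y)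

/-- A De Morgan function preserves a subset X of DM4 if it maps tuples from X into X. -/
def Preserves {k : ℕ} (g : DMFun k) (X : Set DM4) : Prop :=
  ∀ x : Fin (k + 1) → DM4, (∀ i, x i ∈ X) → g x ∈ X

def B2 : Set DM4 := {t, f}
def K3 : Set DM4 := {t, n, f}
def P3 : Set DM4 := {t, b, f}

/-- A unary operation as a De Morgan function. -/
def toF1 (g : DM4 → DM4) : DMFun 0 := fun x => g (x 0)

/-- A binary operation as a De Morgan function. -/
def toF2 (g : DM4 → DM4 → DM4) : DMFun 1 := fun x => g (x 0) (x 1)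

/-- A ternary operation as a De Morgan function. -/
def toF3 (g : DM4 → DM4 → DM4 → DM4) : DMFun 2 := fun x => g (x 0) (x 1) (x 2)

/-- The clone generated by a family of operations, as a family of sets. -/
def CloneOf (S : ∀ k : ℕ, Set (DMFun k)) : ∀ k : ℕ, Set (DMFun k) :=
  fun k => {g | InClone S k g}

/-- Inclusion of families of operations. -/
def CloneLE (C D : ∀ k : ℕ, Set (DMFun k)) : Prop := ∀ k : ℕ, C k ⊆ D k

/-!
Membership in either clone implies the listed properties because each of them is preserved
by projections and composition and holds for the generators; since `◇ = −□−`,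
⟨DLat, □, ◇⟩ ⊆ ⟨DMA, □⟩, so only positivity has to be checked separately for the smaller clone.

For the converse write `unrefuted u` for `u ∈ {t, n}`. A value `u` is determined by
`unrefuted u` and `unrefuted (conf u)`, so a harmonious `g` is determined by `unrefuted ∘ g`.
Hence it suffices to find, for every tuple `a` with `unrefuted (g a)`, a term `T a` of the clone
with `unrefuted (T a a)` such that `unrefuted (T a x)` implies `unrefuted (g x)`: the join of
these terms is harmonious and has the same `unrefuted`-part as `g`, so it equals `g`.
`T a` is a conjunction of literals in the coordinates of `a` (`x i = a i` for ⟨DMA, □⟩,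
`a i ≤ x i` for ⟨DLat, □, ◇⟩), which cannot tell `b` from `n`, and of two guards:
`□(x j ∨ x i)` for `a j = n`, `a i = b`, and `◇` of the meet of the `b`-coordinates of `x`.
The one case the guards leave open is `x` lying above `conf a` for an `a` without
`n`-coordinates, and there preservation of `P3` gives `g a = t`, so `g (conf a) = conf t = t`.
-/

instance : Fintype DM4 := ⟨⟨{t, f, n, b}, by decide⟩, fun x => by cases x <;> decide⟩

instance : DecidableRel tle := fun _ _ => inferInstanceAs (Decidable (_ ∨ _ ∨ _))

section CloneBasics

variable {S T : ∀ k : ℕ, Set (DMFun k)} {C : ∀ k : ℕ, Set (DMFun k)} {k : ℕ}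

theorem InClone.mem_of_isClone (hC : IsClone C) (hS : CloneLE S C) {g : DMFun k}
    (hg : InClone S k g) : g ∈ C k := by
  induction hg with
  | base hg => exact hS _ hg
  | proj i => exact hC.proj _ i
  | comp _ _ ihg ihh => exact hC.comp _ _ _ _ ihg ihh

theorem isClone_cloneOf (S : ∀ k : ℕ, Set (DMFun k)) : IsClone (CloneOf S) :=
  ⟨fun _ => InClone.proj, fun _ _ _ _ => InClone.comp⟩

theorem le_cloneOf (S : ∀ k : ℕ, Set (DMFun k)) : CloneLE S (CloneOf S) :=
  fun _ _ => InClone.base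

theorem InClone.mono (hST : CloneLE S (CloneOf T)) {g : DMFun k} (hg : InClone S k g) :
    InClone T k g :=
  hg.mem_of_isClone (isClone_cloneOf T) hST

theorem InClone.comp1 {u : DM4 → DM4} (hu : InClone S 0 (toF1 u)) {g : DMFun k}
    (hg : InClone S k g) : InClone S k fun x => u (g x) :=
  InClone.comp (h := fun _ => g) hu fun _ => hg

theorem InClone.comp2 {u : DM4 → DM4 → DM4} (hu : InClone S 1 (toF2 u)) {g h : DMFun k}
    (hg : InClone S k g) (hh : InClone S k h) : InClone S k fun x => u (g x) (h x) :=
  InClone.comp (h := ![g, h]) hu fun i => by fin_cases i <;> assumption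

theorem InClone.const {c : DM4} (hc : InClone S 0 (toF1 fun _ => c)) :
    InClone S k fun _ => c :=
  hc.comp1 (InClone.proj 0)

theorem InClone.foldr {op : DM4 → DM4 → DM4} {e : DM4} (hop : InClone S 1 (toF2 op))
    (he : InClone S 0 (toF1 fun _ => e)) {ι : Type*} (l : List ι) {F : ι → DMFun k}
    (hF : ∀ i, InClone S k (F i)) : InClone S k fun x => (l.map (F · x)).foldr op e := by
  induction l with
  | nil => exact InClone.const he
  | cons i l ih => exact hop.comp2 (hF i) ih

theorem cloneLE_funion : CloneLE (S ⊹ T) C ↔ CloneLE S C ∧ CloneLE T C :=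
  ⟨fun h => ⟨fun k _ hg => h k (Or.inl hg), fun k _ hg => h k (Or.inr hg)⟩,
    fun ⟨hS, hT⟩ k _ hg => hg.elim (hS k ·) (hT k ·)⟩

theorem cloneLE_op1 {u : DM4 → DM4} : CloneLE (op1 u) C ↔ toF1 u ∈ C 0 := by
  refine ⟨fun h => h 0 rfl, fun h k g hg => ?_⟩
  rcases k with _ | k
  · exact (Set.mem_singleton_iff.1 hg) ▸ h
  · exact hg.elim

theorem cloneLE_op2 {u : DM4 → DM4 → DM4} : CloneLE (op2 u) C ↔ toF2 u ∈ C 1 := by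
  refine ⟨fun h => h 1 rfl, fun h k g hg => ?_⟩
  rcases k with _ | _ | k
  · exact hg.elim
  · exact (Set.mem_singleton_iff.1 hg) ▸ h
  · exact hg.elim

end CloneBasics

section Invariants

def harmoniousFns : ∀ k : ℕ, Set (DMFun k) := fun _ => {g | Harmonious g}

def positiveFns : ∀ k : ℕ, Set (DMFun k) := fun _ => {g | Positive g}

def preservingFns (X : Set DM4) : ∀ k : ℕ, Set (DMFun k) := fun _ => {g | Preserves g X}

theorem isClone_harmoniousFns : IsClone harmoniousFns where
  proj _ _ _ := rfl
  comp _ _ g h hg hh x := by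
    show g (fun i => h i fun j => conf (x j)) = conf (g fun i => h i x)
    rw [funext fun i => hh i x]
    exact hg _

theorem isClone_positiveFns : IsClone positiveFns where
  proj _ i _ _ hxy := hxy i
  comp _ _ _ _ hg hh _ _ hxy := hg _ _ fun i => hh i _ _ hxy

theorem isClone_preservingFns (X : Set DM4) : IsClone (preservingFns X) where
  proj _ i _ hx := hx i
  comp _ _ _ _ hg hh _ hx := hg _ fun i => hh i _ hx

end Invariants

section Generators

abbrev DMABoxGen : ∀ k : ℕ, Set (DMFun k) := DMAGen ⊹ op1 box

abbrev DLatBoxDiamondGen : ∀ k : ℕ, Set (DMFun k) := DLatGen ⊹ op1 box ⊹ op1 diamond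

variable {C : ∀ k : ℕ, Set (DMFun k)}

theorem dmaBoxGen_le_iff : CloneLE DMABoxGen C ↔
    toF2 meet ∈ C 1 ∧ toF2 join ∈ C 1 ∧ toF1 (fun _ => t) ∈ C 0 ∧ toF1 (fun _ => f) ∈ C 0 ∧
      toF1 neg ∈ C 0 ∧ toF1 box ∈ C 0 := by
  simp only [DMABoxGen, DMAGen, DLatGen, cloneLE_funion, cloneLE_op1, cloneLE_op2, and_assoc]

theorem dLatBoxDiamondGen_le_iff : CloneLE DLatBoxDiamondGen C ↔
    toF2 meet ∈ C 1 ∧ toF2 join ∈ C 1 ∧ toF1 (fun _ => t) ∈ C 0 ∧ toF1 (fun _ => f) ∈ C 0 ∧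
      toF1 box ∈ C 0 ∧ toF1 diamond ∈ C 0 := by
  simp only [DLatBoxDiamondGen, DLatGen, cloneLE_funion, cloneLE_op1, cloneLE_op2, and_assoc]

theorem dmaBoxGen_le_harmoniousFns : CloneLE DMABoxGen harmoniousFns := by
  simp only [dmaBoxGen_le_iff, harmoniousFns, Set.mem_ofPred_eq, Harmonious]
  decide

theorem dmaBoxGen_le_preservingFns_B2 : CloneLE DMABoxGen (preservingFns B2) := by
  simp only [dmaBoxGen_le_iff, preservingFns, Set.mem_ofPred_eq, Preserves, B2,
    Set.mem_insert_iff, Set.mem_singleton_iff]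
  refine ⟨?_, ?_, ?_, ?_, ?_, ?_⟩ <;> decide

theorem dmaBoxGen_le_preservingFns_K3 : CloneLE DMABoxGen (preservingFns K3) := by
  simp only [dmaBoxGen_le_iff, preservingFns, Set.mem_ofPred_eq, Preserves, K3,
    Set.mem_insert_iff, Set.mem_singleton_iff]
  refine ⟨?_, ?_, ?_, ?_, ?_, ?_⟩ <;> decide

theorem dmaBoxGen_le_preservingFns_P3 : CloneLE DMABoxGen (preservingFns P3) := by
  simp only [dmaBoxGen_le_iff, preservingFns, Set.mem_ofPred_eq, Preserves, P3,
    Set.mem_insert_iff, Set.mem_singleton_iff]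
  refine ⟨?_, ?_, ?_, ?_, ?_, ?_⟩ <;> decide

theorem dLatBoxDiamondGen_le_positiveFns : CloneLE DLatBoxDiamondGen positiveFns := by
  simp only [dLatBoxDiamondGen_le_iff, positiveFns, Set.mem_ofPred_eq, Positive]
  decide

theorem diamond_eq_neg_box_neg (u : DM4) : diamond u = neg (box (neg u)) := by
  cases u <;> rfl

theorem dLatBoxDiamondGen_le_cloneOf_dmaBoxGen :
    CloneLE DLatBoxDiamondGen (CloneOf DMABoxGen) := by
  obtain ⟨hmeet, hjoin, ht, hf, hneg, hbox⟩ := dmaBoxGen_le_iff.1 (le_cloneOf DMABoxGen)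
  have hdiamond : toF1 diamond = fun x => neg (box (neg (x 0))) :=
    funext fun x => diamond_eq_neg_box_neg (x 0)
  refine dLatBoxDiamondGen_le_iff.2 ⟨hmeet, hjoin, ht, hf, hbox, ?_⟩
  exact hdiamond ▸ hneg.comp1 (hbox.comp1 (hneg.comp1 (InClone.proj 0)))

theorem InClone.harmonious {k : ℕ} {g : DMFun k} (h : InClone DMABoxGen k g) : Harmonious g :=
  h.mem_of_isClone isClone_harmoniousFns dmaBoxGen_le_harmoniousFns

end Generators

section Unrefuted

def unrefuted : DM4 → Bool
  | t => true
  | n => true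
  | _ => false

theorem eq_of_unrefuted_eq {u v : DM4} (h : unrefuted u = unrefuted v)
    (hconf : unrefuted (conf u) = unrefuted (conf v)) : u = v := by
  revert u v; decide

theorem Harmonious.eq_of_unrefuted {k : ℕ} {g h : DMFun k} (hg : Harmonious g)
    (hh : Harmonious h) (H : ∀ x, unrefuted (g x) = unrefuted (h x)) : g = h :=
  funext fun x => eq_of_unrefuted_eq (H x) (by rw [← hg, ← hh]; exact H _)

theorem unrefuted_meet (u v : DM4) :
    unrefuted (meet u v) = (unrefuted u && unrefuted v) := by
  revert u v; decide

theorem unrefuted_join (u v : DM4) :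
    unrefuted (join u v) = (unrefuted u || unrefuted v) := by
  revert u v; decide

theorem unrefuted_box {u : DM4} : unrefuted (box u) = true ↔ u = t := by
  revert u; decide

theorem unrefuted_diamond (u : DM4) :
    unrefuted (diamond u) = (unrefuted u || unrefuted (conf u)) := by
  revert u; decide

theorem unrefuted_of_tle {u v : DM4} (huv : tle u v) (hu : unrefuted u = true) :
    unrefuted v = true := by
  revert u v; decide

theorem eq_t_of_mem_P3 {u : DM4} (hu : u ∈ P3) (h : unrefuted u = true) : u = t := by
  cases u <;> simp_all [P3, unrefuted]

theorem mem_P3_of_ne_n {u : DM4} (hu : u ≠ n) : u ∈ P3 := by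
  cases u <;> simp_all [P3]

end Unrefuted

section BigOperations

variable {k : ℕ} {ι : Type*} [Fintype ι]

noncomputable def bigMeet (F : ι → DMFun k) : DMFun k :=
  fun x => ((Finset.univ : Finset ι).toList.map (F · x)).foldr meet t

noncomputable def bigJoin (F : ι → DMFun k) : DMFun k :=
  fun x => ((Finset.univ : Finset ι).toList.map (F · x)).foldr join f

theorem foldr_meet_eq_true_iff {φ : DM4 → Bool} (hφ : ∀ u v, φ (meet u v) = (φ u && φ v))
    (ht : φ t = true) (l : List DM4) : φ (l.foldr meet t) = true ↔ ∀ u ∈ l, φ u = true := by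
  induction l with
  | nil => simpa using ht
  | cons u l ih => simp [hφ, ih]

theorem unrefuted_foldr_join (l : List DM4) :
    unrefuted (l.foldr join f) = true ↔ ∃ u ∈ l, unrefuted u = true := by
  induction l with
  | nil => decide
  | cons u l ih => simp [unrefuted_join, ih]

theorem unrefuted_bigMeet {F : ι → DMFun k} {x : Fin (k + 1) → DM4} :
    unrefuted (bigMeet F x) = true ↔ ∀ i, unrefuted (F i x) = true := by
  simp [bigMeet, foldr_meet_eq_true_iff unrefuted_meet rfl]

theorem unrefuted_conf_bigMeet {F : ι → DMFun k} {x : Fin (k + 1) → DM4} :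
    unrefuted (conf (bigMeet F x)) = true ↔ ∀ i, unrefuted (conf (F i x)) = true := by
  simp [bigMeet, foldr_meet_eq_true_iff (φ := fun u => unrefuted (conf u)) (by decide) rfl]

theorem unrefuted_bigJoin {F : ι → DMFun k} {x : Fin (k + 1) → DM4} :
    unrefuted (bigJoin F x) = true ↔ ∃ i, unrefuted (F i x) = true := by
  simp [bigJoin, unrefuted_foldr_join]

variable {S : ∀ k : ℕ, Set (DMFun k)}

theorem InClone.bigMeet (hS : CloneLE DLatBoxDiamondGen (CloneOf S)) {F : ι → DMFun k}
    (hF : ∀ i, InClone S k (F i)) : InClone S k (bigMeet F) :=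
  have h := dLatBoxDiamondGen_le_iff.1 hS
  InClone.foldr h.1 h.2.2.1 _ hF

theorem InClone.bigJoin (hS : CloneLE DLatBoxDiamondGen (CloneOf S)) {F : ι → DMFun k}
    (hF : ∀ i, InClone S k (F i)) : InClone S k (bigJoin F) :=
  have h := dLatBoxDiamondGen_le_iff.1 hS
  InClone.foldr h.2.1 h.2.2.2.1 _ hF

end BigOperations

section PointTerms

variable {k : ℕ} {S : ∀ k : ℕ, Set (DMFun k)}

noncomputable def litTerm (lit : DM4 → DM4 → DM4) (a : Fin (k + 1) → DM4) : DMFun k :=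
  bigMeet fun i x => lit (a i) (x i)

noncomputable def pairGuard (a : Fin (k + 1) → DM4) : DMFun k :=
  bigMeet fun p : Fin (k + 1) × Fin (k + 1) =>
    if a p.1 = n ∧ a p.2 = b then fun x => box (join (x p.1) (x p.2)) else fun _ => t

noncomputable def bGuard (a : Fin (k + 1) → DM4) : DMFun k :=
  fun x => diamond (bigMeet (fun i => if a i = b then fun x => x i else fun _ => t) x)

noncomputable def pointTerm (lit : DM4 → DM4 → DM4) (a : Fin (k + 1) → DM4) : DMFun k :=
  fun x => meet (litTerm lit a x) (meet (pairGuard a x) (bGuard a x))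

theorem unrefuted_pointTerm {lit : DM4 → DM4 → DM4} {a x : Fin (k + 1) → DM4} :
    unrefuted (pointTerm lit a x) = true ↔
      (∀ i, unrefuted (lit (a i) (x i)) = true) ∧
      (∀ j i, a j = n → a i = b → join (x j) (x i) = t) ∧
      ((∀ i, a i = b → unrefuted (x i) = true) ∨
        ∀ i, a i = b → unrefuted (conf (x i)) = true) := by
  have ht : unrefuted t = true ∧ unrefuted (conf t) = true := ⟨rfl, rfl⟩
  simp [pointTerm, litTerm, pairGuard, bGuard, unrefuted_meet, unrefuted_bigMeet, unrefuted_diamond,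
    unrefuted_conf_bigMeet, apply_ite, ite_apply, unrefuted_box, ht, imp_iff_not_or, or_assoc]

theorem unrefuted_pointTerm_self {lit : DM4 → DM4 → DM4} (hlit : ∀ v, unrefuted (lit v v) = true)
    (a : Fin (k + 1) → DM4) : unrefuted (pointTerm lit a a) = true :=
  unrefuted_pointTerm.2
    ⟨fun _ => hlit _, fun _ _ hj hi => by rw [hj, hi]; rfl, Or.inr fun _ hi => by rw [hi]; rfl⟩

theorem InClone.pointTerm (hS : CloneLE DLatBoxDiamondGen (CloneOf S)) {lit : DM4 → DM4 → DM4}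
    (hlit : ∀ v i, InClone S k fun x => lit v (x i)) (a : Fin (k + 1) → DM4) :
    InClone S k (pointTerm lit a) := by
  obtain ⟨hmeet, hjoin, ht, -, hbox, hdiamond⟩ := dLatBoxDiamondGen_le_iff.1 hS
  refine hmeet.comp2 (.bigMeet hS fun i => hlit _ i)
    (hmeet.comp2 (.bigMeet hS fun p => ?_) (hdiamond.comp1 (.bigMeet hS fun i => ?_)))
  · split_ifs
    exacts [hbox.comp1 (hjoin.comp2 (.proj _) (.proj _)), .const ht]
  · split_ifs
    exacts [.proj i, .const ht]

theorem inClone_of_interpolants (hS : CloneLE DLatBoxDiamondGen (CloneOf S))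
    (hSh : ∀ {h : DMFun k}, InClone S k h → Harmonious h) {g : DMFun k} (hg : Harmonious g)
    (T : (Fin (k + 1) → DM4) → DMFun k) (hT : ∀ a, InClone S k (T a))
    (hself : ∀ a, unrefuted (T a a) = true)
    (hsound : ∀ a x, unrefuted (g a) = true → unrefuted (T a x) = true → unrefuted (g x) = true) :
    InClone S k g := by
  let Φ : DMFun k := bigJoin fun a : {a // unrefuted (g a) = true} => T a
  have hΦ : InClone S k Φ := .bigJoin hS fun a => hT a
  have hΦg : Φ = g := (hSh hΦ).eq_of_unrefuted hg fun x => by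
    rw [Bool.eq_iff_iff, unrefuted_bigJoin]
    exact ⟨fun ⟨a, ha⟩ => hsound a x a.2 ha, fun hx => ⟨⟨x, hx⟩, hself x⟩⟩
  exact hΦg ▸ hΦ

end PointTerms

section DMABox

variable {k : ℕ}

def eqLit : DM4 → DM4 → DM4
  | t, u => box u
  | f, u => box (neg u)
  | n, u => meet u (neg u)
  | b, u => neg (join (box u) (box (neg u)))

theorem InClone.eqLit (v : DM4) (i : Fin (k + 1)) :
    InClone DMABoxGen k fun x => eqLit v (x i) := by
  obtain ⟨hmeet, hjoin, -, -, hneg, hbox⟩ := dmaBoxGen_le_iff.1 (le_cloneOf DMABoxGen)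
  have hx : InClone DMABoxGen k fun x => x i := .proj i
  cases v
  · exact hbox.comp1 hx
  · exact hbox.comp1 (hneg.comp1 hx)
  · exact hmeet.comp2 hx (hneg.comp1 hx)
  · exact hneg.comp1 (hjoin.comp2 (hbox.comp1 hx) (hbox.comp1 (hneg.comp1 hx)))

theorem unrefuted_of_unrefuted_pointTerm_eqLit {g : DMFun k} (hg : Harmonious g)
    (hP3 : Preserves g P3) {a x : Fin (k + 1) → DM4} (ha : unrefuted (g a) = true)
    (hx : unrefuted (pointTerm eqLit a x) = true) : unrefuted (g x) = true := by
  obtain ⟨hlit, hpair, hb⟩ := unrefuted_pointTerm.1 hx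
  have eq_of_join : ∀ v u : DM4,
      unrefuted (eqLit v u) = true → (v = b → join n u = t) → u = v := by decide
  by_cases hn : ∃ j, a j = n
  · obtain ⟨j, hj⟩ := hn
    have hxj : x j = n :=
      (eq_of_join _ _ (hlit j) fun h => absurd (hj.symm.trans h) (by decide)).trans hj
    have hxa : x = a := funext fun i => eq_of_join _ _ (hlit i) fun hi => hxj ▸ hpair j i hj hi
    exact hxa ▸ ha
  push Not at hn
  rcases hb with hb | hb
  · have eq_conf : ∀ v u : DM4, v ≠ n → unrefuted (eqLit v u) = true →
        (v = b → unrefuted u = true) → u = conf v := by decide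
    have hxa : x = fun i => conf (a i) := funext fun i => eq_conf _ _ (hn i) (hlit i) (hb i)
    have hga : g a = t := eq_t_of_mem_P3 (hP3 a fun i => mem_P3_of_ne_n (hn i)) ha
    rw [hxa, hg, hga]
    rfl
  · have eq_of_conf : ∀ v u : DM4,
        unrefuted (eqLit v u) = true → (v = b → unrefuted (conf u) = true) → u = v := by decide
    have hxa : x = a := funext fun i => eq_of_conf _ _ (hlit i) (hb i)
    exact hxa ▸ ha

theorem inClone_dmaBoxGen_of_harmonious {g : DMFun k} (hg : Harmonious g)
    (hP3 : Preserves g P3) : InClone DMABoxGen k g :=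
  inClone_of_interpolants dLatBoxDiamondGen_le_cloneOf_dmaBoxGen
    InClone.harmonious hg (pointTerm eqLit)
    (.pointTerm dLatBoxDiamondGen_le_cloneOf_dmaBoxGen InClone.eqLit)
    (unrefuted_pointTerm_self (by decide)) fun _ _ => unrefuted_of_unrefuted_pointTerm_eqLit hg hP3

end DMABox

section DLatBoxDiamond

variable {k : ℕ}

def geLit : DM4 → DM4 → DM4
  | t, u => box u
  | f, _ => t
  | n, u => u
  | b, u => diamond u

theorem InClone.geLit (v : DM4) (i : Fin (k + 1)) :
    InClone DLatBoxDiamondGen k fun x => geLit v (x i) := by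
  obtain ⟨-, -, ht, -, hbox, hdiamond⟩ :=
    dLatBoxDiamondGen_le_iff.1 (le_cloneOf DLatBoxDiamondGen)
  have hx : InClone DLatBoxDiamondGen k fun x => x i := .proj i
  cases v
  · exact hbox.comp1 hx
  · exact .const ht
  · exact hx
  · exact hdiamond.comp1 hx

theorem unrefuted_of_unrefuted_pointTerm_geLit {g : DMFun k} (hg : Harmonious g)
    (hpos : Positive g) (hP3 : Preserves g P3) {a x : Fin (k + 1) → DM4}
    (ha : unrefuted (g a) = true) (hx : unrefuted (pointTerm geLit a x) = true) :
    unrefuted (g x) = true := by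
  obtain ⟨hlit, hpair, hb⟩ := unrefuted_pointTerm.1 hx
  by_cases hbn : ∃ i, a i = b ∧ x i = n
  · -- Raising the `n`-coordinates of `a` to `t` gives a tuple `c` over `P3` with `g c = t`,
    -- and the guards force `conf c ≤ x`.
    obtain ⟨i₀, hai₀, hxi₀⟩ := hbn
    have hbx : ∀ i, a i = b → unrefuted (x i) = true :=
      hb.resolve_right fun h => absurd (hxi₀ ▸ h i₀ hai₀) (by decide)
    have hc : g (fun i => idnt (a i)) = t :=
      eq_t_of_mem_P3 (hP3 _ fun i => mem_P3_of_ne_n (by cases a i <;> decide))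
        (unrefuted_of_tle (hpos _ _ fun i => by cases a i <;> decide) ha)
    have le_conf : ∀ v u : DM4, unrefuted (geLit v u) = true → (v = n → join u n = t) →
        (v = b → unrefuted u = true) → tle (conf (idnt v)) u := by decide
    have hcx := hpos _ x fun i => le_conf _ _ (hlit i) (fun h => hxi₀ ▸ hpair i i₀ h hai₀) (hbx i)
    rw [hg, hc] at hcx
    exact unrefuted_of_tle hcx rfl
  · push Not at hbn
    have le_of : ∀ v u : DM4, unrefuted (geLit v u) = true → (v = b → u ≠ n) → tle v u := by
      decide
    exact unrefuted_of_tle (hpos a x fun i => le_of _ _ (hlit i) (hbn i)) ha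

theorem inClone_dLatBoxDiamondGen_of_positive {g : DMFun k} (hg : Harmonious g)
    (hpos : Positive g) (hP3 : Preserves g P3) : InClone DLatBoxDiamondGen k g :=
  inClone_of_interpolants (le_cloneOf DLatBoxDiamondGen)
    (fun h => (h.mono dLatBoxDiamondGen_le_cloneOf_dmaBoxGen).harmonious) hg (pointTerm geLit)
    (.pointTerm (le_cloneOf DLatBoxDiamondGen) InClone.geLit)
    (unrefuted_pointTerm_self (by decide))
    fun _ _ => unrefuted_of_unrefuted_pointTerm_geLit hg hpos hP3

end DLatBoxDiamond

/-- A De Morgan function lies in ⟨DMA, □⟩ iff it is harmonious and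
preserves B2, K3, P3; and it lies in ⟨DLat, □, ◇⟩ iff it is harmonious, positive,
and preserves B2, K3, P3. -/
theorem box_diamond_clone_characterization (k : ℕ) (g : DMFun k) :
    (InClone (DMAGen ⊹ op1 box) k g ↔
      Harmonious g ∧ Preserves g B2 ∧ Preserves g K3 ∧ Preserves g P3) ∧
    (InClone (DLatGen ⊹ op1 box ⊹ op1 diamond) k g ↔
      Harmonious g ∧ Positive g ∧ Preserves g B2 ∧ Preserves g K3 ∧ Preserves g P3) := by
  have dmaBox_sound (h : InClone DMABoxGen k g) :
      Harmonious g ∧ Preserves g B2 ∧ Preserves g K3 ∧ Preserves g P3 :=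
    ⟨h.harmonious,
      h.mem_of_isClone (isClone_preservingFns B2) dmaBoxGen_le_preservingFns_B2,
      h.mem_of_isClone (isClone_preservingFns K3) dmaBoxGen_le_preservingFns_K3,
      h.mem_of_isClone (isClone_preservingFns P3) dmaBoxGen_le_preservingFns_P3⟩
  refine ⟨⟨dmaBox_sound, fun ⟨hg, _, _, hP3⟩ => inClone_dmaBoxGen_of_harmonious hg hP3⟩,
    ⟨fun h => ?_, fun ⟨hg, hpos, _, _, hP3⟩ => inClone_dLatBoxDiamondGen_of_positive hg hpos hP3⟩⟩
  obtain ⟨hg, hB2, hK3, hP3⟩ := dmaBox_sound (h.mono dLatBoxDiamondGen_le_cloneOf_dmaBoxGen)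
  exact ⟨hg, h.mem_of_isClone isClone_positiveFns dLatBoxDiamondGen_le_positiveFns, hB2, hK3, hP3⟩

end DM4
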